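/- arXiv:1009.2322 — 3 statements merged into one kernel-verified Lean document; each statement's English description precedes it below -/
import Mathlib

section
/- Let G be a simple graph on a finite vertex set V, let ω be a real number, and let O, A : V → ℝ. Let D = {v ∈ V | O(v) > 2ω/3}. Assume: (i) D is an independent set of G; (ii) every vertex v ∉ D has at most 3 neighbors in D; (iii) every vertex v ∉ D satisfies A(v) ≥ 3·O(v)/7. Define B : V → ℝ by B(v) = 3·O(v)/7 if v ∉ D, and B(v) = A(v) + (∑_{u ∈ N(v)} (A(u) − 3·O(u)/7))/3 if v ∈ D, where N(v) is the neighborhood of v in G. Then ∑_{v ∈ V} B(v) ≤ ∑_{v ∈ V} A(v). -/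
open scoped Classical
open Finset

/-!
Write `s u = A u - 3 O u / 7` for the surplus of a safe cell. Each dangerous cell collects a third of
the surplus of each of its neighbours, all of them safe by independence, and a safe cell is
counted by at most three dangerous neighbours; since surpluses are nonnegative, the dangerous cells
collect at most the total surplus of the safe cells, which is exactly what the safe cells gave up.
-/

namespace SimpleGraph

variable {V M : Type*} [Fintype V] (G : SimpleGraph V) [DecidableRel G.Adj]
  (p : V → Prop) [DecidablePred p]

theorem sum_filter_sum_neighborFinset_eq [AddCommMonoid M] (f : V → M) :
    ∑ v with p v, ∑ u ∈ G.neighborFinset v, f u =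
      ∑ u, #{v ∈ G.neighborFinset u | p v} • f u := by
  rw [sum_comm' (t' := univ) (s' := fun u => {v ∈ G.neighborFinset u | p v})]
  · simp only [sum_const]
  · intro v u
    simp [G.adj_comm, and_comm]

theorem sum_filter_sum_neighborFinset_le [AddCommMonoid M] [PartialOrder M] [IsOrderedAddMonoid M]
    (k : ℕ) (f : V → M) (hInd : ∀ u v, p u → p v → ¬ G.Adj u v)
    (hDeg : ∀ v, ¬ p v → #{u ∈ G.neighborFinset v | p u} ≤ k)
    (hf : ∀ v, ¬ p v → 0 ≤ f v) :
    ∑ v with p v, ∑ u ∈ G.neighborFinset v, f u ≤ k • ∑ v with ¬ p v, f v := by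
  have hInside : ∀ u, p u → #{v ∈ G.neighborFinset u | p v} = 0 := fun u hu => by
    simpa [filter_eq_empty_iff] using fun v huv hv => hInd u v hu hv huv
  rw [sum_filter_sum_neighborFinset_eq, ← sum_filter_add_sum_filter_not univ p, smul_sum,
    sum_eq_zero fun u hu => by simp [hInside u (mem_filter.mp hu).2], zero_add]
  exact sum_le_sum fun u hu =>
    nsmul_le_nsmul_left (hf u (mem_filter.mp hu).2) (hDeg u (mem_filter.mp hu).2)

end SimpleGraph

theorem stmt_3_general {V : Type*} [Fintype V] (G : SimpleGraph V)
    (ω : ℝ) (O A B : V → ℝ)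
    (hInd : ∀ u v : V, O u > 2 * ω / 3 → O v > 2 * ω / 3 → ¬ G.Adj u v)
    (hDeg : ∀ v : V, ¬ (O v > 2 * ω / 3) →
      ((G.neighborFinset v).filter (fun u => O u > 2 * ω / 3)).card ≤ 3)
    (hSafe : ∀ v : V, ¬ (O v > 2 * ω / 3) → A v ≥ 3 * O v / 7)
    (hBsafe : ∀ v : V, ¬ (O v > 2 * ω / 3) → B v = 3 * O v / 7)
    (hBdang : ∀ v : V, O v > 2 * ω / 3 →
      B v = A v + (∑ u ∈ G.neighborFinset v, (A u - 3 * O u / 7)) / 3) :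
    ∑ v, B v ≤ ∑ v, A v := by
  set dangerous : V → Prop := fun v => O v > 2 * ω / 3
  set surplus : V → ℝ := fun u => A u - 3 * O u / 7
  have hCollected : ∑ v with dangerous v, ∑ u ∈ G.neighborFinset v, surplus u ≤
      3 * ∑ v with ¬ dangerous v, surplus v := by
    simpa using G.sum_filter_sum_neighborFinset_le dangerous 3 surplus hInd hDeg
      fun v hv => sub_nonneg.mpr (hSafe v hv)
  have hDangerous : ∑ v with dangerous v, B v = ∑ v with dangerous v, A v +
      (∑ v with dangerous v, ∑ u ∈ G.neighborFinset v, surplus u) / 3 := by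
    rw [sum_div, ← sum_add_distrib]
    exact sum_congr rfl fun v hv => hBdang v (mem_filter.mp hv).2
  have hSafeCells : ∑ v with ¬ dangerous v, B v =
      ∑ v with ¬ dangerous v, A v - ∑ v with ¬ dangerous v, surplus v := by
    rw [← sum_sub_distrib]
    exact sum_congr rfl fun v hv => by simp [surplus, hBsafe v (mem_filter.mp hv).2]
  rw [← sum_filter_add_sum_filter_not univ dangerous B,
    ← sum_filter_add_sum_filter_not univ dangerous A, hDangerous, hSafeCells]
  linarith

/-- Lemma 2: the amortized counts B(v) sum to at most the total online
profit ∑ A(v). -/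
theorem stmt_3 {V : Type*} [Fintype V] [DecidableEq V] (G : SimpleGraph V)
    (ω : ℝ) (O A B : V → ℝ)
    (hInd : ∀ u v : V, O u > 2 * ω / 3 → O v > 2 * ω / 3 → ¬ G.Adj u v)
    (hDeg : ∀ v : V, ¬ (O v > 2 * ω / 3) →
      ((G.neighborFinset v).filter (fun u => O u > 2 * ω / 3)).card ≤ 3)
    (hSafe : ∀ v : V, ¬ (O v > 2 * ω / 3) → A v ≥ 3 * O v / 7)
    (hBsafe : ∀ v : V, ¬ (O v > 2 * ω / 3) → B v = 3 * O v / 7)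
    (hBdang : ∀ v : V, O v > 2 * ω / 3 →
      B v = A v + (∑ u ∈ G.neighborFinset v, (A u - 3 * O u / 7)) / 3) :
    ∑ v, B v ≤ ∑ v, A v :=
  stmt_3_general G ω O A B hInd hDeg hSafe hBsafe hBdang
end

section
/- Let ω, Ô, Oᵢ, S be real numbers and m a natural number with ω > 0, m ≥ 1, 0 ≤ Ô ≤ ω/3, Ô ≤ ω − Oᵢ, Oᵢ ≤ ω, and S ≥ ω/7. Then 2ω/7 + (m·(2ω/7) + S − m·(3Ô/7))/3 ≥ 2ω/7 + Oᵢ/7. -/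
theorem stmt_5_general (ω Ohat Oi S : ℝ) (m : ℕ) (hω : 0 < ω) (hm : 1 ≤ m)
    (hOhat : Ohat ≤ ω / 3) (hOhatOi : Ohat ≤ ω - Oi)
    (hS : S ≥ ω / 7) :
    2 * ω / 7 + ((m : ℝ) * (2 * ω / 7) + S - (m : ℝ) * (3 * Ohat / 7)) / 3 ≥
      2 * ω / 7 + Oi / 7 := by
  have hgap : 0 ≤ 2 * ω / 7 - 3 * Ohat / 7 := by linarith
  have hscale : 2 * ω / 7 - 3 * Ohat / 7 ≤ (m : ℝ) * (2 * ω / 7 - 3 * Ohat / 7) :=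
    le_mul_of_one_le_left hgap (by exact_mod_cast hm)
  -- One copy of the gap plus `S ≥ ω / 7` already gives `3 (ω - Ohat) / 7 ≥ 3 Oi / 7`.
  linarith

/-- The displayed chain of inequalities in the proof of Theorem 1. -/
theorem stmt_5 (ω Ohat Oi S : ℝ) (m : ℕ) (hω : 0 < ω) (hm : 1 ≤ m)
    (hOhat0 : 0 ≤ Ohat) (hOhat : Ohat ≤ ω / 3) (hOhatOi : Ohat ≤ ω - Oi)
    (hOi : Oi ≤ ω) (hS : S ≥ ω / 7) :
    2 * ω / 7 + ((m : ℝ) * (2 * ω / 7) + S - (m : ℝ) * (3 * Ohat / 7)) / 3 ≥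
      2 * ω / 7 + Oi / 7 :=
  stmt_5_general ω Ohat Oi S m hω hm hOhat hOhatOi hS
end

section
/- For all real numbers x, y > 0, max((3x+y)/(x+y), 3(3x+y)/(4x+y)) ≥ 7/3. Moreover, if x = 2y then (3x+y)/(x+y) = 7/3 and 3(3x+y)/(4x+y) = 7/3. -/
/-- Every partition-based algorithm has competitive ratio at least 7/3,
with equality at the partition ratio x : y = 2 : 1. -/
theorem stmt_7 (x y : ℝ) (hx : 0 < x) (hy : 0 < y) :
    max ((3 * x + y) / (x + y)) (3 * (3 * x + y) / (4 * x + y)) ≥ 7 / 3 ∧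
    (x = 2 * y → (3 * x + y) / (x + y) = 7 / 3 ∧
      3 * (3 * x + y) / (4 * x + y) = 7 / 3) := by
  constructor
  · rcases le_total x (2 * y) with h | h
    · refine le_max_of_le_right ?_
      rw [div_le_div_iff₀ (by norm_num) (by linarith)]
      linarith
    · refine le_max_of_le_left ?_
      rw [div_le_div_iff₀ (by norm_num) (by linarith)]
      linarith
  · intro h
    subst h
    constructor <;> rw [div_eq_div_iff (by linarith) (by norm_num)] <;> ring
end
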